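/- arXiv:2204.02808 — 2 statements merged into one kernel-verified Lean document; each statement's English description precedes it below -/
import Mathlib

section
/- Let d ≥ 1 and let α, β be non-negative real numbers with α < d, β < d and α + β > d. Then for every x ∈ ℝ^d, ∫_{ℝ^d} (1+|x-y|²)^{-α/2} (1+|y|²)^{-β/2} dy ≤ C (1+|x|²)^{-(α+β-d)/2} for a constant C depending only on α, β, d. -/
/-!
Write `⟨z⟩ = √(1 + ‖z‖²)`. Split the integral according to which of `‖y‖`, `‖x - y‖` is smaller;
by symmetry take `‖y‖ ≤ ‖x - y‖`. If `‖y‖ < ‖x‖ / 2` then `‖x - y‖ > ‖x‖ / 2`, so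
`⟨x - y⟩^{-α} ≲ ⟨x⟩^{-α}`, and the remaining `∫_{‖y‖ < ⟨x⟩} ⟨y⟩^{-β} dy ≤ ∫_{‖y‖ < ⟨x⟩} ‖y‖^{-β} dy`
is `⟨x⟩^{d-β}` times its value on the unit ball, by scaling (this is where `β < d` enters).
Otherwise `‖x‖ / 2 ≤ ‖y‖ ≤ ‖x - y‖`, the integrand is at most `⟨y⟩^{-(α+β)}`, and on that region
`⟨y⟩² ≳ ⟨x⟩² + ‖y‖²`, so rescaling by `⟨x⟩` bounds the tail by `⟨x⟩^{d-α-β} ∫ ⟨y⟩^{-(α+β)} dy`,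
finite because `α + β > d`.
-/

open MeasureTheory Metric Module

noncomputable section

section Bracket

variable {E : Type*} [NormedAddCommGroup E]

/-- `⟨z⟩ ^ (-a)`. -/
def bracketNegPow (a : ℝ) (z : E) : ℝ := (1 + ‖z‖ ^ 2) ^ (-(a / 2))

lemma one_add_norm_sq_pos (z : E) : 0 < 1 + ‖z‖ ^ 2 := by positivity

lemma bracketNegPow_nonneg (a : ℝ) (z : E) : 0 ≤ bracketNegPow a z :=
  Real.rpow_nonneg (one_add_norm_sq_pos z).le _

lemma bracketNegPow_le_rpow_of_le {a P : ℝ} {z : E} (ha : 0 ≤ a) (hP : 0 < P)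
    (h : P ≤ 1 + ‖z‖ ^ 2) : bracketNegPow a z ≤ P ^ (-(a / 2)) :=
  Real.rpow_le_rpow_of_nonpos hP h (by linarith)

lemma bracketNegPow_le_of_norm_le {a : ℝ} {z w : E} (ha : 0 ≤ a) (h : ‖z‖ ≤ ‖w‖) :
    bracketNegPow a w ≤ bracketNegPow a z :=
  bracketNegPow_le_rpow_of_le ha (one_add_norm_sq_pos z) (by gcongr)

lemma bracketNegPow_add (a b : ℝ) (z : E) :
    bracketNegPow (a + b) z = bracketNegPow a z * bracketNegPow b z := by
  rw [bracketNegPow, bracketNegPow, bracketNegPow, ← Real.rpow_add (one_add_norm_sq_pos z)]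
  ring_nf

lemma bracketNegPow_le_norm_rpow {b : ℝ} {z : E} (hb : 0 ≤ b) (hz : z ≠ 0) :
    bracketNegPow b z ≤ ‖z‖ ^ (-b) := by
  have h := bracketNegPow_le_rpow_of_le (P := ‖z‖ ^ 2) hb (by positivity)
    (le_add_of_nonneg_left zero_le_one)
  rwa [← Real.rpow_natCast, ← Real.rpow_mul (norm_nonneg z), Nat.cast_ofNat,
    mul_neg, mul_div_cancel₀ _ two_ne_zero] at h

lemma continuous_bracketNegPow (a : ℝ) : Continuous (bracketNegPow (E := E) a) :=
  (by fun_prop : Continuous fun z : E => 1 + ‖z‖ ^ 2).rpow_const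
    fun z => Or.inl (one_add_norm_sq_pos z).ne'

end Bracket

lemma div_rpow_neg_eq_mul {X c : ℝ} (hX : 0 ≤ X) (hc : 0 ≤ c) (e : ℝ) :
    (X / c) ^ (-e) = c ^ e * X ^ (-e) := by
  rw [Real.div_rpow hX hc, Real.rpow_neg hc, div_inv_eq_mul, mul_comm]

section Majorant

variable {E : Type*} [NormedAddCommGroup E]

def bracketConvMajorant (a b : ℝ) (x v : E) : ℝ :=
  4 ^ (a / 2) * bracketNegPow a x * (ball 0 √(1 + ‖x‖ ^ 2)).indicator (bracketNegPow b) v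
    + {v | ‖x‖ / 2 ≤ ‖v‖}.indicator (bracketNegPow (a + b)) v

lemma bracketConvMajorant_nonneg (a b : ℝ) (x v : E) : 0 ≤ bracketConvMajorant a b x v :=
  add_nonneg
    (mul_nonneg (mul_nonneg (by positivity) (bracketNegPow_nonneg a x))
      (Set.indicator_nonneg (fun z _ => bracketNegPow_nonneg b z) v))
    (Set.indicator_nonneg (fun z _ => bracketNegPow_nonneg (a + b) z) v)

lemma bracketNegPow_mul_le_bracketConvMajorant {a b : ℝ} (ha : 0 ≤ a) {u v : E}
    (h : ‖v‖ ≤ ‖u‖) :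
    bracketNegPow a u * bracketNegPow b v ≤ bracketConvMajorant a b (u + v) v := by
  set x := u + v
  have hv₀ := bracketNegPow_nonneg b v
  rcases le_or_gt (‖x‖ / 2) ‖v‖ with hv | hv
  · calc bracketNegPow a u * bracketNegPow b v ≤ bracketNegPow a v * bracketNegPow b v := by
          gcongr
          exact bracketNegPow_le_of_norm_le ha h
      _ = {v | ‖x‖ / 2 ≤ ‖v‖}.indicator (bracketNegPow (a + b)) v := by
          rw [Set.indicator_of_mem (show v ∈ {v | ‖x‖ / 2 ≤ ‖v‖} from hv), bracketNegPow_add]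
      _ ≤ bracketConvMajorant a b x v :=
          le_add_of_nonneg_left (mul_nonneg (mul_nonneg (by positivity) (bracketNegPow_nonneg a x))
            (Set.indicator_nonneg (fun z _ => bracketNegPow_nonneg b z) v))
  · have hu : bracketNegPow a u ≤ 4 ^ (a / 2) * bracketNegPow a x := by
      calc bracketNegPow a u ≤ ((1 + ‖x‖ ^ 2) / 4) ^ (-(a / 2)) := by
            refine bracketNegPow_le_rpow_of_le ha (by positivity) ?_
            nlinarith [norm_add_le u v, norm_nonneg x]
        _ = _ := div_rpow_neg_eq_mul (by positivity) (by norm_num) _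
    have hv_ball : v ∈ ball (0 : E) √(1 + ‖x‖ ^ 2) := by
      rw [mem_ball_zero_iff]
      refine hv.trans_le ((div_le_self (norm_nonneg x) one_le_two).trans ?_)
      exact Real.le_sqrt_of_sq_le (by linarith)
    calc bracketNegPow a u * bracketNegPow b v
        ≤ 4 ^ (a / 2) * bracketNegPow a x * bracketNegPow b v := by gcongr
      _ = 4 ^ (a / 2) * bracketNegPow a x
            * (ball 0 √(1 + ‖x‖ ^ 2)).indicator (bracketNegPow b) v := by
          rw [Set.indicator_of_mem hv_ball]
      _ ≤ bracketConvMajorant a b x v :=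
          le_add_of_nonneg_right (Set.indicator_nonneg (fun z _ => bracketNegPow_nonneg _ z) v)

end Majorant

section Haar

variable {E : Type*} [NormedAddCommGroup E] [NormedSpace ℝ E] [FiniteDimensional ℝ E]
  [MeasurableSpace E] [BorelSpace E] {μ : Measure E} [μ.IsAddHaarMeasure]

lemma integrable_bracketNegPow {c : ℝ} (hc : (finrank ℝ E : ℝ) < c) :
    Integrable (bracketNegPow c) μ := by
  have h := integrable_rpow_neg_one_add_norm_sq (μ := μ) hc
  rw [neg_div] at h
  exact h

lemma integrableOn_ball_bracketNegPow (a r : ℝ) :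
    IntegrableOn (bracketNegPow a) (ball (0 : E) r) μ :=
  ((continuous_bracketNegPow a).continuousOn.integrableOn_compact
    (isCompact_closedBall 0 r)).mono_set ball_subset_closedBall

lemma setIntegral_ball_norm_rpow (b : ℝ) {r : ℝ} (hr : 0 < r) :
    ∫ y in ball (0 : E) r, ‖y‖ ^ (-b) ∂μ
      = r ^ ((finrank ℝ E : ℝ) - b) * ∫ y in ball (0 : E) 1, ‖y‖ ^ (-b) ∂μ := by
  have h := μ.setIntegral_comp_smul_of_pos (fun y : E => ‖y‖ ^ (-b)) (ball 0 1) hr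
  simp only [norm_smul, Real.norm_of_nonneg hr.le, Real.mul_rpow hr.le (norm_nonneg _),
    integral_const_mul, smul_unitBall_of_pos hr, smul_eq_mul] at h
  rw [Real.rpow_sub hr, Real.rpow_natCast, div_eq_mul_inv, ← Real.rpow_neg hr.le, mul_assoc, h,
    ← mul_assoc, mul_inv_cancel₀ (by positivity), one_mul]

lemma setIntegral_ball_bracketNegPow_le {b : ℝ} (hb0 : 0 ≤ b) (hb : b < finrank ℝ E) {r : ℝ}
    (hr : 0 < r) :
    ∫ y in ball (0 : E) r, bracketNegPow b y ∂μ
      ≤ r ^ ((finrank ℝ E : ℝ) - b) * ∫ y in ball (0 : E) 1, ‖y‖ ^ (-b) ∂μ := by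
  have hd : 1 ≤ finrank ℝ E := by exact_mod_cast hb0.trans_lt hb
  have : Nontrivial E := Module.nontrivial_of_finrank_pos (R := ℝ) hd
  rw [← setIntegral_ball_norm_rpow b hr]
  refine setIntegral_mono_on_ae (integrableOn_ball_bracketNegPow b r)
    (integrableOn_ball_of_norm_le_rpow hd hb (C := 1) ?_
    (measurable_norm.pow_const (-b)).aestronglyMeasurable) measurableSet_ball ?_
  · refine ae_restrict_of_forall_mem measurableSet_ball fun y _ => ?_
    rw [one_mul, Real.norm_of_nonneg (by positivity)]
  · filter_upwards [compl_mem_ae_iff.2 (measure_singleton (μ := μ) 0)] with y hy _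
    exact bracketNegPow_le_norm_rpow hb0 hy

lemma setIntegral_tail_bracketNegPow_le {c : ℝ} (hc : (finrank ℝ E : ℝ) < c) {r : ℝ}
    (hr : 0 ≤ r) :
    ∫ y in {y : E | r ≤ ‖y‖}, bracketNegPow c y ∂μ
      ≤ 2 ^ (c / 2) * (1 + r ^ 2) ^ (-((c - finrank ℝ E) / 2)) * ∫ y, bracketNegPow c y ∂μ := by
  have hc0 : 0 ≤ c := (Nat.cast_nonneg _).trans hc.le
  set σ := √(1 + r ^ 2) with hσ_def
  have hσ : 0 < σ := by positivity
  have hσ2 : σ ^ 2 = 1 + r ^ 2 := Real.sq_sqrt (by positivity)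
  set k := ((1 + r ^ 2) / 2) ^ (-(c / 2)) with hk
  -- On the tail, `1 + ‖y‖² ≥ (σ² + ‖y‖²) / 2`, which rescales to the bracket of `σ⁻¹ • y`.
  have hpt : ∀ y ∈ {y : E | r ≤ ‖y‖}, bracketNegPow c y ≤ k * bracketNegPow c (σ⁻¹ • y) := by
    intro y (hy : r ≤ ‖y‖)
    have hry : r ^ 2 ≤ ‖y‖ ^ 2 := by gcongr
    calc bracketNegPow c y ≤ ((1 + r ^ 2) / 2 * (1 + ‖σ⁻¹ • y‖ ^ 2)) ^ (-(c / 2)) := by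
          refine bracketNegPow_le_rpow_of_le hc0 (by positivity) ?_
          rw [norm_smul, mul_pow, norm_inv, Real.norm_of_nonneg hσ.le, inv_pow, hσ2]
          field_simp
          nlinarith
      _ = k * bracketNegPow c (σ⁻¹ • y) := Real.mul_rpow (by positivity) (by positivity)
  have hg : Integrable (fun y => k * bracketNegPow c (σ⁻¹ • y)) μ :=
    ((integrable_bracketNegPow hc).comp_smul (inv_ne_zero hσ.ne')).const_mul k
  have hS : MeasurableSet {y : E | r ≤ ‖y‖} := measurableSet_le measurable_const measurable_norm
  calc ∫ y in {y : E | r ≤ ‖y‖}, bracketNegPow c y ∂μ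
      ≤ ∫ y in {y : E | r ≤ ‖y‖}, k * bracketNegPow c (σ⁻¹ • y) ∂μ :=
        setIntegral_mono_on (integrable_bracketNegPow hc).integrableOn hg.integrableOn hS hpt
    _ ≤ ∫ y, k * bracketNegPow c (σ⁻¹ • y) ∂μ :=
        setIntegral_le_integral hg (ae_of_all _ fun y => by
          have := bracketNegPow_nonneg c (σ⁻¹ • y); positivity)
    _ = k * σ ^ finrank ℝ E * ∫ y, bracketNegPow c y ∂μ := by
        rw [integral_const_mul, Measure.integral_comp_inv_smul_of_nonneg μ _ hσ.le, smul_eq_mul,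
          mul_assoc]
    _ = _ := by
        have hσd : σ ^ finrank ℝ E = (1 + r ^ 2) ^ ((finrank ℝ E : ℝ) / 2) := by
          rw [hσ_def, Real.sqrt_eq_rpow, ← Real.rpow_natCast, ← Real.rpow_mul (by positivity)]
          ring_nf
        rw [hσd, hk, Real.div_rpow (by positivity) zero_le_two, Real.rpow_neg zero_le_two,
          div_inv_eq_mul, show -((c - finrank ℝ E) / 2) = -(c / 2) + finrank ℝ E / 2 by ring,
          Real.rpow_add (by positivity)]
        ring

lemma integrable_bracketConvMajorant {a b : ℝ} (hab : (finrank ℝ E : ℝ) < a + b) (x : E) :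
    Integrable (bracketConvMajorant a b x) μ :=
  (((integrableOn_ball_bracketNegPow b _).integrable_indicator measurableSet_ball).const_mul _).add
    ((integrable_bracketNegPow hab).indicator (measurableSet_le measurable_const measurable_norm))

lemma integral_bracketConvMajorant {a b : ℝ} (hab : (finrank ℝ E : ℝ) < a + b) (x : E) :
    ∫ v, bracketConvMajorant a b x v ∂μ
      = 4 ^ (a / 2) * bracketNegPow a x * ∫ v in ball (0 : E) √(1 + ‖x‖ ^ 2), bracketNegPow b v ∂μ
        + ∫ v in {v : E | ‖x‖ / 2 ≤ ‖v‖}, bracketNegPow (a + b) v ∂μ := by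
  have hS : MeasurableSet {v : E | ‖x‖ / 2 ≤ ‖v‖} :=
    measurableSet_le measurable_const measurable_norm
  unfold bracketConvMajorant
  rw [integral_add (((integrableOn_ball_bracketNegPow b _).integrable_indicator
      measurableSet_ball).const_mul _) ((integrable_bracketNegPow hab).indicator hS),
    integral_const_mul, integral_indicator measurableSet_ball, integral_indicator hS]

lemma exists_integral_bracketConvMajorant_le {a b : ℝ} (hb0 : 0 ≤ b)
    (hb : b < finrank ℝ E) (hab : (finrank ℝ E : ℝ) < a + b) :
    ∃ C, ∀ x : E, ∫ v, bracketConvMajorant a b x v ∂μ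
      ≤ C * (1 + ‖x‖ ^ 2) ^ (-((a + b - finrank ℝ E) / 2)) := by
  set d : ℝ := (finrank ℝ E : ℝ)
  set K := ∫ y in ball (0 : E) 1, ‖y‖ ^ (-b) ∂μ
  set L := ∫ y, bracketNegPow (a + b) y ∂μ
  have hL : 0 ≤ L := integral_nonneg (bracketNegPow_nonneg _)
  refine ⟨4 ^ (a / 2) * K + 2 ^ ((a + b) / 2) * 4 ^ ((a + b - d) / 2) * L, fun x => ?_⟩
  set J := 1 + ‖x‖ ^ 2
  have hJ : 0 < J := by positivity
  have hball : 4 ^ (a / 2) * bracketNegPow a x * ∫ v in ball (0 : E) √J, bracketNegPow b v ∂μ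
      ≤ 4 ^ (a / 2) * K * J ^ (-((a + b - d) / 2)) := by
    calc _ ≤ 4 ^ (a / 2) * bracketNegPow a x * (√J ^ (d - b) * K) := by
          have := bracketNegPow_nonneg a x
          gcongr
          exact setIntegral_ball_bracketNegPow_le hb0 hb (by positivity)
      _ = _ := by
          rw [bracketNegPow, Real.sqrt_eq_rpow, ← Real.rpow_mul hJ.le,
            show -((a + b - d) / 2) = -(a / 2) + 1 / 2 * (d - b) by ring, Real.rpow_add hJ]
          ring
  have htail : ∫ v in {v : E | ‖x‖ / 2 ≤ ‖v‖}, bracketNegPow (a + b) v ∂μ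
      ≤ 2 ^ ((a + b) / 2) * 4 ^ ((a + b - d) / 2) * L * J ^ (-((a + b - d) / 2)) := by
    calc _ ≤ 2 ^ ((a + b) / 2) * (1 + (‖x‖ / 2) ^ 2) ^ (-((a + b - d) / 2)) * L :=
          setIntegral_tail_bracketNegPow_le hab (by positivity)
      _ ≤ 2 ^ ((a + b) / 2) * (J / 4) ^ (-((a + b - d) / 2)) * L := by
          refine mul_le_mul_of_nonneg_right (mul_le_mul_of_nonneg_left ?_ (by positivity)) hL
          exact Real.rpow_le_rpow_of_nonpos (by positivity) (by linarith) (by linarith)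
      _ = _ := by
          rw [div_rpow_neg_eq_mul hJ.le (by norm_num)]
          ring
  rw [integral_bracketConvMajorant hab]
  linarith

theorem exists_integral_bracketNegPow_sub_mul_le {α β : ℝ} (hα0 : 0 ≤ α) (hβ0 : 0 ≤ β)
    (hα : α < finrank ℝ E) (hβ : β < finrank ℝ E) (hαβ : (finrank ℝ E : ℝ) < α + β) :
    ∃ C, ∀ x : E, ∫ y, bracketNegPow α (x - y) * bracketNegPow β y ∂μ
      ≤ C * (1 + ‖x‖ ^ 2) ^ (-((α + β - finrank ℝ E) / 2)) := by
  obtain ⟨C₁, h₁⟩ := exists_integral_bracketConvMajorant_le (μ := μ) hβ0 hβ hαβ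
  obtain ⟨C₂, h₂⟩ := exists_integral_bracketConvMajorant_le (μ := μ) hα0 hα
    (by rwa [add_comm])
  refine ⟨C₁ + C₂, fun x => ?_⟩
  have hpt : ∀ y, bracketNegPow α (x - y) * bracketNegPow β y
      ≤ bracketConvMajorant α β x y + bracketConvMajorant β α x (x - y) := by
    intro y
    rcases le_total ‖y‖ ‖x - y‖ with h | h
    · have := bracketNegPow_mul_le_bracketConvMajorant (b := β) hα0 h
      rw [sub_add_cancel] at this
      linarith [bracketConvMajorant_nonneg β α x (x - y)]
    · have := bracketNegPow_mul_le_bracketConvMajorant (b := α) hβ0 h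
      rw [add_sub_cancel] at this
      linarith [bracketConvMajorant_nonneg α β x y]
  calc ∫ y, bracketNegPow α (x - y) * bracketNegPow β y ∂μ
      ≤ ∫ y, bracketConvMajorant α β x y + bracketConvMajorant β α x (x - y) ∂μ :=
        integral_mono_of_nonneg
          (ae_of_all _ fun y => mul_nonneg (bracketNegPow_nonneg _ _) (bracketNegPow_nonneg _ _))
          ((integrable_bracketConvMajorant hαβ x).add
            ((integrable_bracketConvMajorant (by rwa [add_comm]) x).comp_sub_left x))
          (ae_of_all _ hpt)
    _ = ∫ v, bracketConvMajorant α β x v ∂μ + ∫ v, bracketConvMajorant β α x v ∂μ := by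
        rw [integral_add (integrable_bracketConvMajorant hαβ x)
          ((integrable_bracketConvMajorant (by rwa [add_comm]) x).comp_sub_left x),
          integral_sub_left_eq_self]
    _ ≤ (C₁ + C₂) * (1 + ‖x‖ ^ 2) ^ (-((α + β - finrank ℝ E) / 2)) := by
        have := h₂ x
        rw [add_comm β α] at this
        linarith [h₁ x]

end Haar

end

theorem stmt_0_general (d : ℕ) (α β : ℝ) (hα0 : 0 ≤ α) (hβ0 : 0 ≤ β)
    (hα : α < d) (hβ : β < d) (hαβ : (d : ℝ) < α + β) :
    ∃ C : ℝ, 0 < C ∧ ∀ x : EuclideanSpace ℝ (Fin d),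
      (∫ y : EuclideanSpace ℝ (Fin d),
          (1 + ‖x - y‖ ^ 2) ^ (-(α / 2)) * (1 + ‖y‖ ^ 2) ^ (-(β / 2)))
        ≤ C * (1 + ‖x‖ ^ 2) ^ (-((α + β - d) / 2)) := by
  have hrank : (finrank ℝ (EuclideanSpace ℝ (Fin d)) : ℝ) = d := by simp
  obtain ⟨C, hC⟩ := exists_integral_bracketNegPow_sub_mul_le
    (μ := (volume : Measure (EuclideanSpace ℝ (Fin d)))) hα0 hβ0
    (hrank ▸ hα) (hrank ▸ hβ) (hrank ▸ hαβ)
  rw [hrank] at hC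
  refine ⟨max C 1, by positivity, fun x => (hC x).trans ?_⟩
  exact mul_le_mul_of_nonneg_right (le_max_left _ _) (by positivity)

theorem stmt_0 (d : ℕ) (hd : 1 ≤ d) (α β : ℝ) (hα0 : 0 ≤ α) (hβ0 : 0 ≤ β)
    (hα : α < d) (hβ : β < d) (hαβ : (d : ℝ) < α + β) :
    ∃ C : ℝ, 0 < C ∧ ∀ x : EuclideanSpace ℝ (Fin d),
      (∫ y : EuclideanSpace ℝ (Fin d),
          (1 + ‖x - y‖ ^ 2) ^ (-(α / 2)) * (1 + ‖y‖ ^ 2) ^ (-(β / 2)))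
        ≤ C * (1 + ‖x‖ ^ 2) ^ (-((α + β - d) / 2)) :=
  stmt_0_general d α β hα0 hβ0 hα hβ hαβ
end

section
/- Let d ≥ 1, α ∈ (d/4, d/2), s > d/2 − α and κ ≥ 0 with 4s − 2κ + 4α − 2d > 0. Then ∬_{ℝ^d×ℝ^d, |ξ₁|>1, |ξ₁−ξ₂|<|ξ₂|} (1+|ξ₁|²)^{-(2s-κ)} (1+|ξ₁−ξ₂|²)^{-α} (1+|ξ₂|²)^{-α} (1+|κ(ξ)|)^{-1} dξ₁ dξ₂ < ∞, where κ(ξ) = |ξ₁|² − |ξ₁−ξ₂|² + |ξ₂|². -/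
/-!
On the region `‖ξ₁ - ξ₂‖ < ‖ξ₂‖` the resonance factor `1 + |κ(ξ)|` dominates `⟨ξ₁⟩²`, and
`⟨ξ₁⟩ ≤ 2⟨ξ₂⟩`, so a small power `δ` of the decay in `ξ₂` can be moved onto `ξ₁`. The integrand is
then at most a constant times `⟨ξ₁⟩^{-2r} ⟨ξ₁ - ξ₂⟩^{-2α} ⟨ξ₂⟩^{-2(α - δ)}` with `2r > d`.
By Hölder the `ξ₂`-integral is bounded, uniformly in `ξ₁`, by `∫ ⟨·⟩^{-2(2α - δ)}`, which is
finite because `2α - δ > d/2`; the remaining `ξ₁`-integral converges.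
-/

open MeasureTheory Module
open scoped ENNReal

/-- `⟨x⟩^{-2r}` for the Japanese bracket `⟨x⟩ = (1 + ‖x‖²)^{1/2}`. -/
noncomputable def bracketWeight {E : Type*} [NormedAddCommGroup E] (r : ℝ) (x : E) : ℝ≥0∞ :=
  ENNReal.ofReal ((1 + ‖x‖ ^ 2) ^ (-r))

section Weight

variable {E : Type*} [NormedAddCommGroup E]

theorem bracketWeight_add (r t : ℝ) (x : E) :
    bracketWeight (r + t) x = bracketWeight r x * bracketWeight t x := by
  rw [bracketWeight, bracketWeight, bracketWeight, ← ENNReal.ofReal_mul (by positivity),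
    ← Real.rpow_add (by positivity), neg_add]

theorem bracketWeight_rpow (r : ℝ) {e : ℝ} (he : 0 ≤ e) (x : E) :
    bracketWeight r x ^ e = bracketWeight (r * e) x := by
  rw [bracketWeight, bracketWeight, ENNReal.ofReal_rpow_of_nonneg (by positivity) he,
    ← Real.rpow_mul (by positivity), neg_mul]

theorem bracketWeight_le_of_le_mul {C δ : ℝ} (hC : 0 < C) (hδ : 0 ≤ δ) {x y : E}
    (hxy : 1 + ‖x‖ ^ 2 ≤ C * (1 + ‖y‖ ^ 2)) :
    bracketWeight δ y ≤ ENNReal.ofReal (C ^ δ) * bracketWeight δ x := by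
  rw [bracketWeight, bracketWeight, ← ENNReal.ofReal_mul (by positivity)]
  refine ENNReal.ofReal_le_ofReal ?_
  calc (1 + ‖y‖ ^ 2) ^ (-δ) ≤ ((1 + ‖x‖ ^ 2) / C) ^ (-δ) :=
        Real.rpow_le_rpow_of_nonpos (by positivity) ((div_le_iff₀' hC).2 hxy) (by linarith)
    _ = C ^ δ * (1 + ‖x‖ ^ 2) ^ (-δ) := by
        rw [Real.div_rpow (by positivity) hC.le, Real.rpow_neg hC.le, div_inv_eq_mul, mul_comm]

theorem bracketWeight_ne_top (r : ℝ) (x : E) : bracketWeight r x ≠ ∞ := ENNReal.ofReal_ne_top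

theorem measurable_bracketWeight [MeasurableSpace E] [OpensMeasurableSpace E] (r : ℝ) :
    Measurable (bracketWeight r : E → ℝ≥0∞) := by
  unfold bracketWeight
  fun_prop

end Weight

section Integrals

variable {E : Type*} [NormedAddCommGroup E] [NormedSpace ℝ E] [FiniteDimensional ℝ E]
  [MeasurableSpace E] [BorelSpace E] {μ : Measure E} [μ.IsAddHaarMeasure]

theorem lintegral_bracketWeight_lt_top {r : ℝ} (hr : (finrank ℝ E : ℝ) < 2 * r) :
    ∫⁻ x, bracketWeight r x ∂μ < ∞ := by
  have := (integrable_rpow_neg_one_add_norm_sq (μ := μ) hr).lintegral_lt_top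
  simpa [bracketWeight, neg_div] using this

/-- Hölder with exponents `(β + γ) / β` and `(β + γ) / γ` turns both factors into
`⟨·⟩^{-2(β + γ)}`. -/
theorem lintegral_bracketWeight_sub_mul_le {β γ : ℝ} (hβ : 0 < β) (hγ : 0 < γ) (x : E) :
    ∫⁻ y, bracketWeight β (x - y) * bracketWeight γ y ∂μ ≤ ∫⁻ y, bracketWeight (β + γ) y ∂μ := by
  set θ := β / (β + γ)
  have hθ : 0 < θ := by positivity
  have hθ' : 0 < 1 - θ := by rw [one_sub_div (by positivity), add_sub_cancel_left]; positivity
  have hβθ : β * θ⁻¹ = β + γ := by simp only [θ, inv_div]; field_simp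
  have hγθ : γ * (1 - θ)⁻¹ = β + γ := by
    simp only [θ, one_sub_div (by positivity : β + γ ≠ 0), add_sub_cancel_left, inv_div]
    field_simp
  calc ∫⁻ y, bracketWeight β (x - y) * bracketWeight γ y ∂μ
      ≤ (∫⁻ y, bracketWeight β (x - y) ^ θ⁻¹ ∂μ) ^ (1 / θ⁻¹) *
          (∫⁻ y, bracketWeight γ y ^ (1 - θ)⁻¹ ∂μ) ^ (1 / (1 - θ)⁻¹) :=
        ENNReal.lintegral_mul_le_Lp_mul_Lq μ (.inv_inv hθ hθ' (add_sub_cancel θ 1))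
          ((measurable_bracketWeight β).comp (measurable_const.sub measurable_id)).aemeasurable
          (measurable_bracketWeight γ).aemeasurable
    _ = (∫⁻ y, bracketWeight (β + γ) y ∂μ) ^ (θ + (1 - θ)) := by
        simp_rw [bracketWeight_rpow _ (inv_nonneg.2 hθ.le),
          bracketWeight_rpow _ (inv_nonneg.2 hθ'.le),
          hβθ, hγθ, lintegral_sub_left_eq_self (fun z => bracketWeight (β + γ) z) x, one_div,
          inv_inv, ENNReal.rpow_add_of_nonneg _ _ hθ.le hθ'.le]
    _ = ∫⁻ y, bracketWeight (β + γ) y ∂μ := by rw [add_sub_cancel, ENNReal.rpow_one]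

theorem lintegral_prod_bracketWeight_lt_top {r β γ : ℝ} (hr : (finrank ℝ E : ℝ) < 2 * r)
    (hβ : 0 < β) (hγ : 0 < γ) (hβγ : (finrank ℝ E : ℝ) < 2 * (β + γ)) :
    ∫⁻ p, bracketWeight r p.1 * (bracketWeight β (p.1 - p.2) * bracketWeight γ p.2) ∂μ.prod μ
      < ∞ := by
  have hmeas : Measurable fun p : E × E =>
      bracketWeight r p.1 * (bracketWeight β (p.1 - p.2) * bracketWeight γ p.2) :=
    ((measurable_bracketWeight r).comp measurable_fst).mul
      (((measurable_bracketWeight β).comp (measurable_fst.sub measurable_snd)).mul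
        ((measurable_bracketWeight γ).comp measurable_snd))
  set I := ∫⁻ y, bracketWeight (β + γ) y ∂μ
  calc ∫⁻ p, bracketWeight r p.1 * (bracketWeight β (p.1 - p.2) * bracketWeight γ p.2) ∂μ.prod μ
      = ∫⁻ x, bracketWeight r x * ∫⁻ y, bracketWeight β (x - y) * bracketWeight γ y ∂μ ∂μ := by
        rw [lintegral_prod _ hmeas.aemeasurable]
        exact lintegral_congr fun x => lintegral_const_mul' _ _ (bracketWeight_ne_top r x)
    _ ≤ ∫⁻ x, bracketWeight r x * I ∂μ :=
        lintegral_mono fun x => mul_le_mul_right (lintegral_bracketWeight_sub_mul_le hβ hγ x) _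
    _ = (∫⁻ x, bracketWeight r x ∂μ) * I :=
        lintegral_mul_const' _ _ (lintegral_bracketWeight_lt_top hβγ).ne
    _ < ∞ :=
        ENNReal.mul_lt_top (lintegral_bracketWeight_lt_top hr) (lintegral_bracketWeight_lt_top hβγ)

end Integrals

section Region

variable {E : Type*} [NormedAddCommGroup E]

theorem one_add_norm_sq_le_four_mul {x y : E} (hxy : ‖x - y‖ ≤ ‖y‖) :
    1 + ‖x‖ ^ 2 ≤ 4 * (1 + ‖y‖ ^ 2) := by
  have : ‖x‖ ≤ 2 * ‖y‖ := by linarith [norm_le_norm_sub_add x y]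
  nlinarith [norm_nonneg x]

theorem inv_one_add_abs_le_bracketWeight_one {x y : E} (hxy : ‖x - y‖ ≤ ‖y‖) :
    ENNReal.ofReal (1 + |‖x‖ ^ 2 - ‖x - y‖ ^ 2 + ‖y‖ ^ 2|)⁻¹ ≤ bracketWeight 1 x := by
  have : ‖x - y‖ ^ 2 ≤ ‖y‖ ^ 2 := pow_le_pow_left₀ (norm_nonneg _) hxy 2
  rw [bracketWeight, Real.rpow_neg_one]
  refine ENNReal.ofReal_le_ofReal (inv_anti₀ (by positivity) ?_)
  rw [abs_of_nonneg (by nlinarith [sq_nonneg ‖x‖])]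
  linarith

theorem integrand_le_of_norm_sub_le {x y : E} (hxy : ‖x - y‖ ≤ ‖y‖) (r α : ℝ) {δ : ℝ}
    (hδ : 0 ≤ δ) :
    ENNReal.ofReal ((1 + ‖x‖ ^ 2) ^ (-r) * (1 + ‖x - y‖ ^ 2) ^ (-α) * (1 + ‖y‖ ^ 2) ^ (-α) *
        (1 + |‖x‖ ^ 2 - ‖x - y‖ ^ 2 + ‖y‖ ^ 2|)⁻¹) ≤
      ENNReal.ofReal (4 ^ δ) *
        (bracketWeight (r + 1 + δ) x * (bracketWeight α (x - y) * bracketWeight (α - δ) y)) := by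
  rw [ENNReal.ofReal_mul (by positivity), ENNReal.ofReal_mul (by positivity),
    ENNReal.ofReal_mul (by positivity)]
  change bracketWeight r x * bracketWeight α (x - y) * bracketWeight α y * _ ≤ _
  calc bracketWeight r x * bracketWeight α (x - y) * bracketWeight α y *
        ENNReal.ofReal (1 + |‖x‖ ^ 2 - ‖x - y‖ ^ 2 + ‖y‖ ^ 2|)⁻¹
      = bracketWeight r x * bracketWeight α (x - y) *
          (bracketWeight δ y * bracketWeight (α - δ) y) *
          ENNReal.ofReal (1 + |‖x‖ ^ 2 - ‖x - y‖ ^ 2 + ‖y‖ ^ 2|)⁻¹ := by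
        rw [← bracketWeight_add, add_sub_cancel]
    _ ≤ bracketWeight r x * bracketWeight α (x - y) *
          (ENNReal.ofReal (4 ^ δ) * bracketWeight δ x * bracketWeight (α - δ) y) *
          bracketWeight 1 x := by
        gcongr
        · exact bracketWeight_le_of_le_mul four_pos hδ (one_add_norm_sq_le_four_mul hxy)
        · exact inv_one_add_abs_le_bracketWeight_one hxy
    _ = ENNReal.ofReal (4 ^ δ) *
          (bracketWeight (r + 1 + δ) x * (bracketWeight α (x - y) * bracketWeight (α - δ) y)) := by
        rw [bracketWeight_add, bracketWeight_add]
        ring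

end Region

theorem stmt_9_general (d : ℕ) (α s κ : ℝ)
    (hα1 : (d : ℝ) / 4 < α) (hα2 : α < (d : ℝ) / 2)
    (hcond : 0 < 4 * s - 2 * κ + 4 * α - 2 * d) :
    (∫⁻ p in {p : EuclideanSpace ℝ (Fin d) × EuclideanSpace ℝ (Fin d) |
        1 < ‖p.1‖ ∧ ‖p.1 - p.2‖ < ‖p.2‖},
        ENNReal.ofReal
          ((1 + ‖p.1‖ ^ 2) ^ (-(2 * s - κ)) * (1 + ‖p.1 - p.2‖ ^ 2) ^ (-α) *
            (1 + ‖p.2‖ ^ 2) ^ (-α) *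
            (1 + |‖p.1‖ ^ 2 - ‖p.1 - p.2‖ ^ 2 + ‖p.2‖ ^ 2|)⁻¹)) < ⊤ := by
  obtain ⟨δ, hδ0, hδr, hδα⟩ : ∃ δ : ℝ, 0 ≤ δ ∧ (d : ℝ) / 2 - 1 - (2 * s - κ) < δ ∧
      δ < 2 * α - (d : ℝ) / 2 := by
    have hmax : max 0 ((d : ℝ) / 2 - 1 - (2 * s - κ)) < 2 * α - (d : ℝ) / 2 :=
      max_lt (by linarith) (by linarith)
    obtain ⟨δ, hlo, hhi⟩ := exists_between hmax
    exact ⟨δ, (le_max_left _ _).trans hlo.le, (le_max_right _ _).trans_lt hlo, hhi⟩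
  have hfin := lintegral_prod_bracketWeight_lt_top
    (μ := (volume : Measure (EuclideanSpace ℝ (Fin d)))) (r := 2 * s - κ + 1 + δ) (β := α)
    (γ := α - δ) (by rw [finrank_euclideanSpace_fin]; linarith) (by linarith) (by linarith)
    (by rw [finrank_euclideanSpace_fin]; linarith)
  calc _ ≤ ∫⁻ p in {p : EuclideanSpace ℝ (Fin d) × EuclideanSpace ℝ (Fin d) |
          1 < ‖p.1‖ ∧ ‖p.1 - p.2‖ < ‖p.2‖}, ENNReal.ofReal (4 ^ δ) *
            (bracketWeight (2 * s - κ + 1 + δ) p.1 *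
              (bracketWeight α (p.1 - p.2) * bracketWeight (α - δ) p.2)) :=
        setLIntegral_mono' (by measurability) fun p hp =>
          integrand_le_of_norm_sub_le hp.2.le _ _ hδ0
    _ ≤ _ := setLIntegral_le_lintegral _ _
    _ < ⊤ := by
        rw [lintegral_const_mul' _ _ ENNReal.ofReal_ne_top]
        exact ENNReal.mul_lt_top ENNReal.ofReal_lt_top hfin

theorem stmt_9 (d : ℕ) (hd : 1 ≤ d) (α s κ : ℝ)
    (hα1 : (d : ℝ) / 4 < α) (hα2 : α < (d : ℝ) / 2)
    (hs : (d : ℝ) / 2 - α < s) (hκ : 0 ≤ κ)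
    (hcond : 0 < 4 * s - 2 * κ + 4 * α - 2 * d) :
    (∫⁻ p in {p : EuclideanSpace ℝ (Fin d) × EuclideanSpace ℝ (Fin d) |
        1 < ‖p.1‖ ∧ ‖p.1 - p.2‖ < ‖p.2‖},
        ENNReal.ofReal
          ((1 + ‖p.1‖ ^ 2) ^ (-(2 * s - κ)) * (1 + ‖p.1 - p.2‖ ^ 2) ^ (-α) *
            (1 + ‖p.2‖ ^ 2) ^ (-α) *
            (1 + |‖p.1‖ ^ 2 - ‖p.1 - p.2‖ ^ 2 + ‖p.2‖ ^ 2|)⁻¹)) < ⊤ :=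
  stmt_9_general d α s κ hα1 hα2 hcond
end
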